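/- Suppose c < c_⋆, where c_⋆ = -1 - x_⋆ - e^{x_⋆} and x_⋆ is the unique positive solution of x e^x/(1+e^x) = 1. Then for every x ∈ [0,1] with x ≠ x_c^*, there exists ε_x > 0 such that |m_c^t(x) − x_c^*| > ε_x for every integer t ≥ 0 (equivalently, τ̂(ε_x, x, c) = ∞). -/

import Mathlib

open Real MeasureTheory

noncomputable def sigmoid (x : ℝ) : ℝ := Real.exp x / (1 + Real.exp x)

noncomputable def mc (c x : ℝ) : ℝ := _root_.sigmoid (c * x)

lemma sigmoid_pos (x : ℝ) : 0 < _root_.sigmoid x := by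
  unfold _root_.sigmoid; positivity

lemma sigmoid_lt_one (x : ℝ) : _root_.sigmoid x < 1 := by
  unfold _root_.sigmoid
  rw [div_lt_one (by positivity)]
  linarith [Real.exp_pos x]

lemma sigmoid_strictMono : StrictMono _root_.sigmoid := by
  intro a b hab
  unfold _root_.sigmoid
  rw [div_lt_div_iff₀ (by positivity) (by positivity)]
  nlinarith [Real.exp_lt_exp.mpr hab, Real.exp_pos a, Real.exp_pos b]

lemma hasDerivAt_sigmoid (x : ℝ) :
    HasDerivAt _root_.sigmoid (_root_.sigmoid x * (1 - _root_.sigmoid x)) x := by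
  have hne : (1 + Real.exp x) ≠ 0 := by positivity
  have h := (Real.hasDerivAt_exp x).div
    ((hasDerivAt_const x (1:ℝ)).add (Real.hasDerivAt_exp x)) hne
  refine h.congr_deriv ?_
  simp only [_root_.sigmoid, Pi.add_apply]
  field_simp
  ring

lemma hasDerivAt_mc (c x : ℝ) :
    HasDerivAt (mc c) (c * (mc c x * (1 - mc c x))) x := by
  have h1 : HasDerivAt (fun y : ℝ => c * y) c x := by
    simpa using (hasDerivAt_id x).const_mul c
  have h2 := (_root_.hasDerivAt_sigmoid (c * x)).comp x h1
  exact h2.congr_deriv (mul_comm _ _)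

lemma continuous_mc (c : ℝ) : Continuous (mc c) := by
  unfold mc _root_.sigmoid
  exact (Real.continuous_exp.comp (continuous_const.mul continuous_id)).div
    (continuous_const.add (Real.continuous_exp.comp (continuous_const.mul continuous_id)))
    (fun x => by positivity)

lemma mc_strictAnti {c : ℝ} (hc : c < 0) : StrictAnti (mc c) := by
  intro a b hab
  exact _root_.sigmoid_strictMono (by nlinarith)

lemma mvt_bound (c lam a b : ℝ) (hab : a ≤ b)
    (hd : ∀ u ∈ Set.Icc a b, lam ≤ |c * (mc c u * (1 - mc c u))|) :
    lam * (b - a) ≤ |mc c b - mc c a| := by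
  rcases eq_or_lt_of_le hab with rfl | h
  · simp
  · obtain ⟨ξ, hξ, hder⟩ := exists_hasDerivAt_eq_slope (mc c)
      (fun u => c * (mc c u * (1 - mc c u))) h
      ((continuous_mc c).continuousOn)
      (fun u _ => hasDerivAt_mc c u)
    have hξ' : ξ ∈ Set.Icc a b := Set.mem_Icc_of_Ioo hξ
    have h1 := hd ξ hξ'
    have hba : (0:ℝ) < b - a := by linarith
    have h2 : |mc c b - mc c a| = |c * (mc c ξ * (1 - mc c ξ))| * (b - a) := by
      have : mc c b - mc c a = c * (mc c ξ * (1 - mc c ξ)) * (b - a) := by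
        field_simp at hder
        linarith [hder]
      rw [this, abs_mul, abs_of_pos hba]
    rw [h2]
    nlinarith
/-- If c < c⋆, the iterates started away from the fixed point never approach it:
τ̂(ε_x, x, c) = ∞ for some ε_x > 0. -/
theorem dyn_no_convergence (xs c xc : ℝ)
    (hxs : 0 < xs ∧ xs * Real.exp xs / (1 + Real.exp xs) = 1)
    (hc : c < -1 - xs - Real.exp xs)
    (hxc : xc ∈ Set.Icc (0:ℝ) 1 ∧ mc c xc = xc) :
    ∀ x ∈ Set.Icc (0:ℝ) 1, x ≠ xc →
      ∃ εx > (0:ℝ), ∀ t : ℕ, |(mc c)^[t] x - xc| > εx := by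
  obtain ⟨hxs0, hxs1⟩ := hxs
  obtain ⟨hxcI, hfix⟩ := hxc
  have hexs := Real.exp_pos xs
  have hxs2 : xs * Real.exp xs = 1 + Real.exp xs := by
    have hne : (1 + Real.exp xs) ≠ 0 := by positivity
    field_simp at hxs1
    linarith
  have hc0 : c < 0 := by linarith
  have hxc0 : 0 < xc := by rw [← hfix]; exact _root_.sigmoid_pos _
  have hxc1 : xc < 1 := by rw [← hfix]; exact _root_.sigmoid_lt_one _
  set y := -(c * xc) with hydef
  have hy0 : 0 < y := by nlinarith
  have hEy := Real.exp_pos y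
  have hkey : xc * (1 + Real.exp y) = 1 := by
    have h : Real.exp (c * xc) / (1 + Real.exp (c * xc)) = xc := hfix
    have he : Real.exp y = (Real.exp (c * xc))⁻¹ := by
      rw [hydef, Real.exp_neg]
    have hE := Real.exp_pos (c * xc)
    rw [← h, he]
    field_simp
    ring
  have h1 : -c = y * (1 + Real.exp y) := by
    have h : y * (1 + Real.exp y) = -c * (xc * (1 + Real.exp y)) := by
      rw [hydef]; ring
    rw [hkey] at h; linarith
  have h2 : xs * (1 + Real.exp xs) < -c := by nlinarith
  have hyx : xs < y := by
    by_contra hle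
    push_neg at hle
    nlinarith [Real.exp_le_exp.mpr hle, Real.exp_pos y]
  have hxsg1 : 1 < xs := by nlinarith
  set D := -(c * (xc * (1 - xc))) with hDdef
  have hDval : D * (1 + Real.exp y) = y * Real.exp y := by
    have hDe : D = y * (1 - xc) := by rw [hydef, hDdef]; ring
    rw [hDe]; nlinarith [hkey]
  have hgt : 1 < (y - 1) * Real.exp y := by
    have e1 : (xs - 1) * Real.exp xs = 1 := by nlinarith
    nlinarith [Real.exp_lt_exp.mpr hyx, Real.exp_pos xs]
  have hD : 1 < D := by nlinarith
  set lam := (1 + D) / 2 with hlamdef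
  have hlam : 1 < lam := by rw [hlamdef]; linarith
  have hlamD : lam < D := by rw [hlamdef]; linarith
  -- continuity: derivative magnitude stays above lam near xc
  have hFcont : Continuous (fun u => -(c * (mc c u * (1 - mc c u)))) :=
    (continuous_const.mul ((continuous_mc c).mul
      (continuous_const.sub (continuous_mc c)))).neg
  have hmem : xc ∈ (fun u => -(c * (mc c u * (1 - mc c u)))) ⁻¹' Set.Ioi lam := by
    simp only [Set.mem_preimage, Set.mem_Ioi, hfix]
    exact hlamD
  obtain ⟨r, hr0, hball⟩ := Metric.isOpen_iff.mp
    (isOpen_Ioi.preimage hFcont) xc hmem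
  set ε₀ := r / 2 with hε₀def
  have hε₀ : 0 < ε₀ := by rw [hε₀def]; linarith
  have hFball : ∀ u, |u - xc| ≤ ε₀ → lam ≤ |c * (mc c u * (1 - mc c u))| := by
    intro u hu
    have hmemb : u ∈ Metric.ball xc r := by
      rw [Metric.mem_ball, Real.dist_eq]; rw [hε₀def] at hu; linarith
    have h := hball hmemb
    simp only [Set.mem_preimage, Set.mem_Ioi] at h
    have := neg_le_abs (c * (mc c u * (1 - mc c u)))
    linarith
  have hexpand : ∀ u, |u - xc| ≤ ε₀ → lam * |u - xc| ≤ |mc c u - xc| := by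
    intro u hu
    rcases le_total u xc with h | h
    · have hu' : xc - u ≤ ε₀ := by rw [abs_of_nonpos (by linarith)] at hu; linarith
      have hm := mvt_bound c lam u xc h (fun v hv => by
        refine hFball v ?_
        obtain ⟨hv1, hv2⟩ := hv
        rw [abs_of_nonpos (by linarith)]
        linarith)
      rw [abs_sub_comm, hfix] at hm
      rw [abs_of_nonpos (by linarith : u - xc ≤ 0)]
      have e : -(u - xc) = xc - u := by ring
      rw [e]; exact hm
    · have hu' : u - xc ≤ ε₀ := by rw [abs_of_nonneg (by linarith)] at hu; linarith
      have hm := mvt_bound c lam xc u h (fun v hv => by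
        refine hFball v ?_
        obtain ⟨hv1, hv2⟩ := hv
        rw [abs_of_nonneg (by linarith)]
        linarith)
      rw [hfix] at hm
      rwa [abs_of_nonneg (by linarith : (0:ℝ) ≤ u - xc)]
  intro x hx hne
  have hA : StrictAnti (mc c) := mc_strictAnti hc0
  set d₀ := min ε₀ |x - xc| with hd₀def
  have hd₀ : 0 < d₀ := lt_min hε₀ (abs_pos.mpr (sub_ne_zero.mpr hne))
  set δp := xc - mc c (xc + d₀) with hδpdef
  set δm := mc c (xc - d₀) - xc with hδmdef
  have hδp : 0 < δp := by
    have := hA (by linarith : xc < xc + d₀)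
    rw [hfix] at this
    rw [hδpdef]; linarith
  have hδm : 0 < δm := by
    have := hA (by linarith : xc - d₀ < xc)
    rw [hfix] at this
    rw [hδmdef]; linarith
  set ε := min d₀ (min δp δm) with hεdef
  have hε : 0 < ε := lt_min hd₀ (lt_min hδp hδm)
  have hεd₀ : ε ≤ d₀ := min_le_left _ _
  have hεδp : ε ≤ δp := le_trans (min_le_right _ _) (min_le_left _ _)
  have hεδm : ε ≤ δm := le_trans (min_le_right _ _) (min_le_right _ _)
  have hd₀ε₀ : d₀ ≤ ε₀ := min_le_left _ _
  have hstep : ∀ u : ℝ, ε ≤ |u - xc| → ε ≤ |mc c u - xc| := by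
    intro u hu
    rcases le_or_gt d₀ |u - xc| with h | h
    · rcases le_total u xc with h2 | h2
      · have hu' : u ≤ xc - d₀ := by
          rw [abs_of_nonpos (by linarith)] at h; linarith
        have hmono : mc c (xc - d₀) ≤ mc c u := hA.antitone hu'
        have : δm ≤ mc c u - xc := by rw [hδmdef]; linarith
        calc ε ≤ δm := hεδm
          _ ≤ mc c u - xc := this
          _ ≤ |mc c u - xc| := le_abs_self _
      · have hu' : xc + d₀ ≤ u := by
          rw [abs_of_nonneg (by linarith)] at h; linarith
        have hmono : mc c u ≤ mc c (xc + d₀) := hA.antitone hu'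
        have : δp ≤ -(mc c u - xc) := by rw [hδpdef]; linarith
        calc ε ≤ δp := hεδp
          _ ≤ -(mc c u - xc) := this
          _ ≤ |mc c u - xc| := neg_le_abs _
    · have hle : |u - xc| ≤ ε₀ := by linarith
      have hexp := hexpand u hle
      calc ε ≤ |u - xc| := hu
        _ ≤ lam * |u - xc| := le_mul_of_one_le_left (abs_nonneg _) (le_of_lt hlam)
        _ ≤ |mc c u - xc| := hexp
  have hiter : ∀ t : ℕ, ε ≤ |(mc c)^[t] x - xc| := by
    intro t
    induction t with
    | zero =>
        simp only [Function.iterate_zero, id_eq]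
        exact le_trans hεd₀ (min_le_right _ _)
    | succ n ih =>
        rw [Function.iterate_succ_apply']
        exact hstep _ ih
  refine ⟨ε / 2, by linarith, fun t => ?_⟩
  have := hiter t
  linarith
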